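/- Assume |τ_{α∨}| ≠ 1 for all α ∈ R₀. Let ξ ∈ V be regular, i.e. ⟨ξ,α⟩ ∉ 2πℤ for all α ∈ R₀, set C(ζ) := ∏_{α∈R₀⁺} (1 − τ_{α∨}² e^{−i⟨ζ,α⟩})/(1 − e^{−i⟨ζ,α⟩}), and define φ_ξ : P → ℂ by φ_ξ(λ) := ∑_{v∈W₀} C(vξ) e^{i⟨vξ,λ⟩}. If ξ satisfies the Bethe-type equations e^{ic⟨ξ,ν⟩} = ∏_{α∈R₀⁺} ((1 − τ_{α∨}² e^{i⟨ξ,α⟩})/(τ_{α∨}² − e^{i⟨ξ,α⟩}))^{⟨ν,α∨⟩} for all ν ∈ Q, then I₀ φ_ξ = τ₀ φ_ξ, where I₀ is the integral-reflection operator attached to the simple affine root a₀ = −ϑ∨ + c. -/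

import Mathlib

open scoped RealInnerProductSpace BigOperators Classical

noncomputable section

/-- Alternating composition `A ∘ B ∘ A ∘ ⋯` with `m` factors (starting with `A`). -/
def altComp {α : Type*} (A B : α → α) : ℕ → (α → α)
  | 0 => id
  | m + 1 => A ∘ altComp B A m

/-- The sign of a real number, as an integer (with `sgnZ 0 = 0`). -/
def sgnZ (x : ℝ) : ℤ := if 0 < x then 1 else if x < 0 then -1 else 0

/-- The function `v(x) = (1-t²)∫₀ˣ dy/(1-2t cos y+t²)`. -/
def mvfun (t x : ℝ) : ℝ :=
  (1 - t ^ 2) * ∫ y in (0:ℝ)..x, 1 / (1 - 2 * t * Real.cos y + t ^ 2)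

section AffineOps

variable {V : Type*} [NormedAddCommGroup V] [InnerProductSpace ℝ V]

/-- The coroot `α∨ = 2α/⟨α,α⟩`. -/
def coroot (α : V) : V := (2 / ⟪α, α⟫) • α

/-- The affine root `a = α∨ + r c` (encoded as the pair `(α, r)`), as an affine
function on `V`. -/
def aval (c : ℝ) (a : V × ℤ) (x : V) : ℝ := ⟪x, coroot a.1⟫ + a.2 * c

/-- The affine reflection `s_a(x) = x - a(x) α` attached to `a = α∨ + r c`. -/
def sAff (c : ℝ) (a : V × ℤ) (x : V) : V := x - aval c a x • a.1

/-- `w` maps the affine root `a` to the affine root `b`, i.e. `(wa)(x) = a(w⁻¹x) = b(x)`. -/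
def mapsRoot (c : ℝ) (w : Equiv.Perm V) (a b : V × ℤ) : Prop :=
  ∀ x : V, aval c a (w⁻¹ x) = aval c b x

/-- The linear part `w′` of an affine transformation `w`. -/
def linPart (w : Equiv.Perm V) (x : V) : V := w x - w 0

variable {R : Type*} [Field R]

/-- The difference-reflection operator `T̂_a`. -/
def hatT (c : ℝ) (τ : V × ℤ → R) (a : V × ℤ) (f : V → R) (x : V) : R :=
  if 0 < aval c a x then τ a * f (sAff c a x)
  else if aval c a x = 0 then τ a * f x
  else (τ a)⁻¹ * f (sAff c a x) + (τ a - (τ a)⁻¹) * f x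

/-- The discrete integral operator `J_a`. -/
def Jop (c : ℝ) (a : V × ℤ) (f : V → R) (x : V) : R :=
  if 0 < aval c a x then
    - ∑ k ∈ Finset.Icc (1 : ℤ) ⌊aval c a x⌋, f (x - k • a.1)
  else if aval c a x = 0 then 0
  else ∑ k ∈ Finset.Ico (0 : ℤ) (-⌊aval c a x⌋), f (x + k • a.1)

/-- The integral-reflection operator `I_a = τ_a s_a + (τ_a - τ_a⁻¹) J_a`. -/
def Iop (c : ℝ) (τ : V × ℤ → R) (a : V × ℤ) (f : V → R) (x : V) : R :=
  τ a * f (sAff c a x) + (τ a - (τ a)⁻¹) * Jop c a f x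

end AffineOps

/-- An irreducible reduced crystallographic root system spanning `V`, together with a
choice of positive roots, simple roots, and the highest short root. -/
structure RootSystemData (V : Type*) [NormedAddCommGroup V] [InnerProductSpace ℝ V] :
    Type _ where
  n : ℕ
  n_pos : 1 ≤ n
  rank_eq : Module.finrank ℝ V = n
  R0 : Finset V
  ne_zero : ∀ α ∈ R0, α ≠ (0 : V)
  span_top : Submodule.span ℝ (R0 : Set V) = ⊤
  reduced : ∀ α ∈ R0, ∀ t : ℝ, t • α ∈ R0 → t = 1 ∨ t = -1
  crystallographic : ∀ α ∈ R0, ∀ β ∈ R0, ∃ k : ℤ, ⟪β, coroot α⟫ = (k : ℝ)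
  reflect_mem : ∀ α ∈ R0, ∀ β ∈ R0, β - ⟪β, coroot α⟫ • α ∈ R0
  irreducible : ∀ S : Finset V, S ⊆ R0 →
      (∀ a ∈ S, ∀ b ∈ R0, b ∉ S → ⟪a, b⟫ = 0) → S = ∅ ∨ S = R0
  pos : Finset V
  pos_subset : pos ⊆ R0
  pos_or_neg : ∀ α ∈ R0, α ∈ pos ∨ -α ∈ pos
  pos_not_both : ∀ α ∈ pos, -α ∉ pos
  pos_add : ∀ α ∈ pos, ∀ β ∈ pos, α + β ∈ R0 → α + β ∈ pos
  simpleRoot : Fin n → V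
  simpleRoot_mem : ∀ j, simpleRoot j ∈ pos
  pos_natCombo : ∀ α ∈ pos, ∃ k : Fin n → ℕ, α = ∑ j, (k j : ℝ) • simpleRoot j
  hshort : V
  hshort_mem : hshort ∈ pos
  hshort_short : ∀ α ∈ R0, ‖hshort‖ ≤ ‖α‖
  hshort_highest : ∀ α ∈ R0, ‖α‖ = ‖hshort‖ →
      ∃ k : Fin n → ℕ, hshort - α = ∑ j, (k j : ℝ) • simpleRoot j

namespace RootSystemData

variable {V : Type*} [NormedAddCommGroup V] [InnerProductSpace ℝ V]
variable (D : RootSystemData V)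

/-- The weight lattice `P`. -/
def weightLattice : Set V :=
  {x : V | ∀ α ∈ D.R0, ∃ k : ℤ, ⟪x, coroot α⟫ = (k : ℝ)}

/-- The root lattice `Q`. -/
def rootLattice : Set V := (Submodule.span ℤ (D.R0 : Set V) : Set V)

/-- The coweight lattice `P∨`. -/
def coweightLattice : Set V :=
  {x : V | ∀ α ∈ D.R0, ∃ k : ℤ, ⟪x, α⟫ = (k : ℝ)}

/-- The dominant cone. -/
def dominant : Set V := {x : V | ∀ α ∈ D.pos, 0 ≤ ⟪x, coroot α⟫}

/-- `ω` is a minuscule (dominant) weight. -/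
def IsMinuscule (ω : V) : Prop :=
  ω ∈ D.weightLattice ∧ ω ∈ D.dominant ∧ ω ≠ 0 ∧
    ∀ α ∈ D.pos, ⟪ω, coroot α⟫ ≤ 1

/-- `ω` is the quasi-minuscule weight, i.e. the highest short root. -/
def IsQuasiMinuscule (ω : V) : Prop := ω = D.hshort

/-- The saturated set `P_ϑ` containing the (quasi-)minuscule weights. -/
def Ptheta : Set V :=
  {ν : V | ν ∈ D.weightLattice ∧ ∀ α ∈ D.R0, α ≠ ν → |⟪ν, coroot α⟫| ≤ 1}

/-- Half sum of the positive roots. -/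
def rhoHalf : V := (2⁻¹ : ℝ) • ∑ α ∈ D.pos, α

/-- Half sum of the positive coroots. -/
def rhoVee : V := (2⁻¹ : ℝ) • ∑ α ∈ D.pos, coroot α

/-- `(α, r)` encodes an affine root. -/
def IsAffRoot (a : V × ℤ) : Prop := a.1 ∈ D.R0

/-- `(α, r)` encodes a positive affine root. -/
def IsAffPos (a : V × ℤ) : Prop :=
  a.1 ∈ D.R0 ∧ (1 ≤ a.2 ∨ (a.2 = 0 ∧ a.1 ∈ D.pos))

/-- `(α, r)` encodes a negative affine root. -/
def IsAffNeg (a : V × ℤ) : Prop := D.IsAffPos (-a.1, -a.2)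

/-- The simple affine roots `a₀ = -ϑ∨ + c`, `a_j = α_j∨`. -/
def aSimple (j : Fin (D.n + 1)) : V × ℤ :=
  Fin.cons (α := fun _ => V × ℤ) (-D.hshort, (1 : ℤ))
    (fun i => (D.simpleRoot i, (0 : ℤ))) j

/-- The reflections generating the finite Weyl group `W₀`. -/
def W0Gens : Set (Equiv.Perm V) :=
  {e | ∃ α ∈ D.R0, ∀ x, e x = x - ⟪x, coroot α⟫ • α}

/-- The finite Weyl group `W₀`. -/
def W0 : Subgroup (Equiv.Perm V) := Subgroup.closure D.W0Gens

variable (c : ℝ)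

/-- The affine reflections generating the affine Weyl group `W_R`. -/
def AffGens : Set (Equiv.Perm V) :=
  {e | ∃ a : V × ℤ, D.IsAffRoot a ∧ ∀ x, e x = sAff c a x}

/-- The affine Weyl group `W_R`. -/
def WR : Subgroup (Equiv.Perm V) := Subgroup.closure (D.AffGens c)

/-- The translations `t_{cλ}`, `λ ∈ P`. -/
def TransGens : Set (Equiv.Perm V) :=
  {e | ∃ lam ∈ D.weightLattice, ∀ x : V, e x = x + c • lam}

/-- The extended affine Weyl group `W = W₀ ⋉ t(cP)`. -/
def Wext : Subgroup (Equiv.Perm V) :=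
  Subgroup.closure (D.AffGens c ∪ D.TransGens c)

/-- The set `R(w) = R⁺ ∩ w⁻¹(R⁻)`. -/
def RW (w : Equiv.Perm V) : Set (V × ℤ) :=
  {a | D.IsAffPos a ∧ ∃ b : V × ℤ, D.IsAffNeg b ∧ mapsRoot c w a b}

/-- The length `ℓ(w) = #R(w)`. -/
def len (w : Equiv.Perm V) : ℕ := (D.RW c w).ncard

/-- The closed fundamental alcove `A_c`. -/
def alcove : Set V := {x | ∀ a : V × ℤ, D.IsAffPos a → 0 ≤ aval c a x}

/-- `wmin x` is the unique shortest element of the affine Weyl group mapping `x` into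
the fundamental alcove. -/
def IsWmin (wmin : V → Equiv.Perm V) : Prop :=
  ∀ x : V, wmin x ∈ D.WR c ∧ (wmin x) x ∈ D.alcove c ∧
    ∀ w ∈ D.WR c, w x ∈ D.alcove c → D.len c (wmin x) < D.len c w ∨ w = wmin x

/-- One step in the Bruhat order: `w < w s_a` whenever `ℓ(w) < ℓ(w s_a)`. -/
def bruhatStep (w w' : Equiv.Perm V) : Prop :=
  ∃ a : V × ℤ, D.IsAffPos a ∧ ∃ e : Equiv.Perm V,
    (∀ x, e x = sAff c a x) ∧ w' = w * e ∧ D.len c w < D.len c w'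

/-- The Bruhat order on the affine Weyl group. -/
def bruhatLE (w w' : Equiv.Perm V) : Prop :=
  Relation.ReflTransGen (D.bruhatStep c) w w'

/-- The partial order on `V`: `x ≤ y` iff `x₊ = y₊` and `w_x ≤ w_y` (Bruhat). -/
def vle (wmin : V → Equiv.Perm V) (x y : V) : Prop :=
  (wmin x) x = (wmin y) y ∧ D.bruhatLE c (wmin x) (wmin y)

/-- The interval `[x, y]` for the order `vle`. -/
def vInterval (wmin : V → Equiv.Perm V) (x y : V) : Set V :=
  {z : V | D.vle c wmin x z ∧ D.vle c wmin z y}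

/-- The partial order `⪯` on the weight lattice:
`μ ⪯ λ` iff `λ - μ ∈ Q` and `Conv [μ₊, μ] ⊆ Conv [λ₊, λ]`. -/
def pleq (wmin : V → Equiv.Perm V) (μ lam : V) : Prop :=
  lam - μ ∈ D.rootLattice ∧
    convexHull ℝ (D.vInterval c wmin ((wmin μ) μ) μ)
      ⊆ convexHull ℝ (D.vInterval c wmin ((wmin lam) lam) lam)

section Ops

variable {R : Type*} [Field R]

/-- `τ` is a multiplicity function: nonvanishing on affine roots, and invariant
under the (extended affine) Weyl group action on the affine roots. -/
def IsMultiplicity (τ : V × ℤ → R) : Prop :=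
  (∀ a : V × ℤ, D.IsAffRoot a → τ a ≠ 0) ∧
    ∀ w ∈ D.Wext c, ∀ a b : V × ℤ, D.IsAffRoot a → D.IsAffRoot b →
      mapsRoot c w a b → τ a = τ b

/-- `τ_w = ∏_{a ∈ R(w)} τ_a`. -/
def tauw (τ : V × ℤ → R) (w : Equiv.Perm V) : R := ∏ᶠ a ∈ D.RW c w, τ a

/-- `τ₀`, the multiplicity of the affine simple root `a₀`. -/
def tauZero (τ : V × ℤ → R) : R := τ (-D.hshort, (1 : ℤ))

/-- The operator `I_{j₁} ∘ ⋯ ∘ I_{jℓ}` attached to a word in the simple reflections. -/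
def wordOp (τ : V × ℤ → R) (l : List (Fin (D.n + 1))) : (V → R) → V → R :=
  (l.map fun j => Iop c τ (D.aSimple j)).foldr (· ∘ ·) id

/-- `l` is a reduced word for `w`, i.e. `w = s_{j₁} ∘ ⋯ ∘ s_{jℓ}` with `ℓ = ℓ(w)`. -/
def IsReducedWord (w : Equiv.Perm V) (l : List (Fin (D.n + 1))) : Prop :=
  l.length = D.len c w ∧
    ∀ x : V, w x = ((l.map fun j => sAff c (D.aSimple j)).foldr (· ∘ ·) id) x

/-- `e∨_τ(η) = ∏_{α ∈ R₀⁺} τ_{α∨}^{⟨η,α∨⟩}`. -/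
def etau (τ : V × ℤ → R) (η : V) : R :=
  ∏ α ∈ D.pos, τ (α, (0 : ℤ)) ^ ⌊⟪η, coroot α⟫⌋

/-- `h∨_τ = τ₀² e∨_τ(ϑ)`. -/
def hvee (τ : V × ℤ → R) : R := D.tauZero τ ^ 2 * D.etau τ D.hshort

/-- `θ(μ) = #{b ∈ R(w_μ) : b(μ) = -2}`. -/
def theta (wmin : V → Equiv.Perm V) (μ : V) : ℕ :=
  {b : V × ℤ | b ∈ D.RW c (wmin μ) ∧ aval c b μ = -2}.ncard

/-- The coefficient `c_{λ,η} = θ(λ-η) e∨_τ(η) (h∨_τ)^{-sign⟨λ,η∨⟩}`. -/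
def ccoef (τ : V × ℤ → R) (wmin : V → Equiv.Perm V) (lam η : V) : R :=
  (D.theta c wmin (lam - η) : R) * D.etau τ η *
    D.hvee τ ^ (-sgnZ ⟪lam, coroot η⟫)

/-- The coefficient `a_{λ,ν} = τ_{w_{w_λ(λ-ν)}} τ_{w_{w_λ(λ-ν)} w_λ} τ_{w_λ}⁻¹`. -/
def acoef (τ : V × ℤ → R) (wmin : V → Equiv.Perm V) (lam ν : V) : R :=
  D.tauw c τ (wmin ((wmin lam) (lam - ν))) *
    D.tauw c τ (wmin ((wmin lam) (lam - ν)) * wmin lam) *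
    (D.tauw c τ (wmin lam))⁻¹

/-- The coefficient `b_{λ,ν}`. -/
def bcoef (τ : V × ℤ → R) (wmin : V → Equiv.Perm V) (lam ν : V) : R :=
  if (wmin (lam - ν)) (lam - ν) = (wmin lam) lam then
    D.tauw c τ (wmin ((wmin lam) (lam - ν))) ^ 2 *
      (if D.IsAffNeg (ν, ⌊(1 - ⟪lam, coroot ν⟫) / c⌋) then 1 else 0)
  else D.ccoef c τ wmin ((wmin lam) lam) (linPart (wmin lam) ν)

/-- The intertwining operator `(𝒥f)(λ) = τ_{w_λ}⁻¹ (I_{w_λ} f)(λ₊)`, where `Iw` assigns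
to each `w_λ` the composite of integral-reflection operators along a reduced word. -/
def Jcal (τ : V × ℤ → R) (wmin : V → Equiv.Perm V)
    (Iw : Equiv.Perm V → (V → R) → V → R) (f : V → R) (x : V) : R :=
  (D.tauw c τ (wmin x))⁻¹ * Iw (wmin x) f ((wmin x) x)

end Ops

/-- The Yang–Yang type Morse function `𝒱_μ`. -/
def morse (t : V → ℝ) (μ ξ : V) : ℝ :=
  (c / 2) * ⟪ξ, ξ⟫ - 2 * Real.pi * ⟪D.rhoVee + μ, ξ⟫ +
    ∑ α ∈ D.pos, (2 / ⟪α, α⟫) * ∫ x in (0:ℝ)..(⟪ξ, α⟫), mvfun (t α) x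

/-- The critical equation `cξ + ∑_{α>0} v_α(⟨ξ,α⟩) α∨ = 2π(ρ∨+μ)`. -/
def criticalEq (t : V → ℝ) (μ ξ : V) : Prop :=
  c • ξ + ∑ α ∈ D.pos, mvfun (t α) ⟪ξ, α⟫ • coroot α
    = (2 * Real.pi) • (D.rhoVee + μ)

/-- The Hessian bilinear form `H_{η,ζ}(ξ)`. -/
def hessForm (t : V → ℝ) (ξ η ζ : V) : ℝ :=
  c * ⟪η, ζ⟫ + ∑ α ∈ D.R0,
    (1 - t α ^ 2) * ⟪η, α⟫ * ⟪ζ, α⟫ /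
      (⟪α, α⟫ * (1 - 2 * t α * Real.cos ⟪ξ, α⟫ + t α ^ 2))

/-- `κ_± = (2/n) ∑_{α>0} (1-t_α²)/(1 ± |t_α|)²`; here `s = ±1`. -/
def kappaPM (t : V → ℝ) (s : ℝ) : ℝ :=
  (2 / (D.n : ℝ)) * ∑ α ∈ D.pos, (1 - t α ^ 2) / (1 + s * |t α|) ^ 2

end RootSystemData

open RootSystemData in
/-- The Harish-Chandra type `c`-function
`C(ζ) = ∏_{α ∈ R₀⁺} (1 - τ_{α∨}² e^{-i⟨ζ,α⟩})/(1 - e^{-i⟨ζ,α⟩})`. -/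
def Cfun {V : Type*} [NormedAddCommGroup V] [InnerProductSpace ℝ V]
    (D : RootSystemData V) (τ : V → ℂ) (ζ : V) : ℂ :=
  ∏ α ∈ D.pos,
    (1 - (τ α) ^ 2 * Complex.exp (-(Complex.I * (⟪ζ, α⟫ : ℝ)))) /
      (1 - Complex.exp (-(Complex.I * (⟪ζ, α⟫ : ℝ))))

open RootSystemData in
/-- The Bethe Ansatz wave function `φ_ξ(λ) = ∑_{v ∈ W₀} C(vξ) e^{i⟨vξ,λ⟩}`. -/
def planeWaveSum {V : Type*} [NormedAddCommGroup V] [InnerProductSpace ℝ V]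
    (D : RootSystemData V) (τ : V → ℂ) (W0fin : Finset (Equiv.Perm V))
    (ξ lam : V) : ℂ :=
  ∑ w ∈ W0fin, Cfun D τ (w ξ) * Complex.exp (Complex.I * (⟪w ξ, lam⟫ : ℝ))

/-!
On the weight lattice, `I₀` sends a plane wave `e_ζ = e^{i⟨ζ,·⟩}` with `q = e^{i⟨ζ,ϑ⟩} ≠ 1` to a
combination of `e_ζ` and the reflected wave `e_{s_ϑ ζ}`: summing the geometric series in `J₀`
gives `I₀ e_ζ = q^c a(q) e_{s_ϑ ζ} + (τ₀ - a(q)) e_ζ` with `a(q) = (τ₀⁻¹ q - τ₀)/(q - 1)`.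
As `s_ϑ W₀ = W₀`, the reflected waves in `φ_ξ` can be reindexed, and since
`a(q⁻¹) = a(q) F_ϑ(ζ)` with `F_α(ζ) = (1 - τ_α² e^{i⟨ζ,α⟩})/(τ_α² - e^{i⟨ζ,α⟩})`, the claim
reduces to `C(s_ϑ ζ) F_ϑ(ζ) = q^c C(ζ)` for `ζ = wξ`, `w ∈ W₀`.

Comparing `C(s_ϑ ζ)` with `C(ζ)` factor by factor leaves `∏ F_β(ζ)` over the positive roots `β`
with `s_ϑ β < 0`. Because `⟨ϑ, β∨⟩ = [s_ϑ β < 0] + [β = ϑ]` for `β > 0`, multiplying by `F_ϑ(ζ)`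
gives `∏_{β>0} F_β(ζ)^{⟨ϑ,β∨⟩}`, which by `W₀`-equivariance is the right-hand side of the Bethe
equation for `ν = w⁻¹ϑ`, i.e. `q^c`.
-/

section Reflection

variable {V : Type*} [NormedAddCommGroup V] [InnerProductSpace ℝ V]

lemma inner_coroot (x α : V) : ⟪x, coroot α⟫ = 2 / ⟪α, α⟫ * ⟪x, α⟫ :=
  real_inner_smul_right x α _

lemma coroot_neg (α : V) : coroot (-α) = -coroot α := by
  simp [coroot]

lemma inner_coroot_self {α : V} (hα : α ≠ 0) : ⟪α, coroot α⟫ = 2 := by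
  rw [inner_coroot]
  field_simp [inner_self_ne_zero.mpr hα]

lemma inner_coroot_eq_zero_iff {x α : V} (hα : α ≠ 0) : ⟪x, coroot α⟫ = 0 ↔ ⟪x, α⟫ = 0 := by
  simp [inner_coroot, hα]

lemma inner_coroot_self_smul (α : V) : ⟪α, coroot α⟫ • α = (2 : ℝ) • α := by
  rcases eq_or_ne α 0 with rfl | hα
  · simp
  · rw [inner_coroot_self hα]

lemma reflect_involutive (α : V) :
    Function.Involutive fun x : V => x - ⟪x, coroot α⟫ • α := by
  intro x
  simp only [inner_sub_left, real_inner_smul_left, sub_smul, mul_smul, inner_coroot_self_smul]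
  module

def rootReflection (α : V) : Equiv.Perm V :=
  (reflect_involutive α).toPerm

lemma rootReflection_apply (α x : V) : rootReflection α x = x - ⟪x, coroot α⟫ • α := rfl

@[simp] lemma rootReflection_rootReflection (α x : V) :
    rootReflection α (rootReflection α x) = x :=
  reflect_involutive α x

lemma rootReflection_inv (α : V) : (rootReflection α)⁻¹ = rootReflection α :=
  Equiv.ext fun _ => rfl

lemma rootReflection_self (α : V) : rootReflection α α = -α := by
  rw [rootReflection_apply, inner_coroot_self_smul]
  module

lemma inner_rootReflection (α x y : V) :
    ⟪rootReflection α x, rootReflection α y⟫ = ⟪x, y⟫ := by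
  rcases eq_or_ne α 0 with rfl | hα
  · simp [rootReflection_apply]
  simp only [rootReflection_apply, inner_sub_left, inner_sub_right, real_inner_smul_left,
    real_inner_smul_right, inner_coroot, real_inner_comm α y]
  field_simp [inner_self_ne_zero.mpr hα]
  ring

lemma rootReflection_eq_self_of_inner_eq_zero {α x : V} (h : ⟪x, α⟫ = 0) :
    rootReflection α x = x := by
  simp [rootReflection_apply, inner_coroot, h]

end Reflection

namespace RootSystemData

variable {V : Type*} [NormedAddCommGroup V] [InnerProductSpace ℝ V] (D : RootSystemData V)

def rootAutomorphisms : Subgroup (Equiv.Perm V) where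
  carrier := {w | (∀ x y, ⟪w x, w y⟫ = ⟪x, y⟫) ∧ ∀ x, w x ∈ D.R0 ↔ x ∈ D.R0}
  mul_mem' {u v} hu hv :=
    ⟨fun x y => (hu.1 _ _).trans (hv.1 x y), fun x => (hu.2 _).trans (hv.2 x)⟩
  one_mem' := ⟨fun _ _ => rfl, fun _ => Iff.rfl⟩
  inv_mem' {w} hw := by
    refine ⟨fun x y => ?_, fun x => ?_⟩
    · rw [← hw.1, Equiv.Perm.coe_inv, Equiv.apply_symm_apply, Equiv.apply_symm_apply]
    · rw [← hw.2, Equiv.Perm.coe_inv, Equiv.apply_symm_apply]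

lemma rootReflection_mem_W0 {α : V} (hα : α ∈ D.R0) : rootReflection α ∈ D.W0 :=
  Subgroup.subset_closure ⟨α, hα, fun _ => rfl⟩

lemma W0_le_rootAutomorphisms : D.W0 ≤ D.rootAutomorphisms := by
  refine (Subgroup.closure_le _).mpr ?_
  rintro e ⟨α, hα, he⟩
  obtain rfl : e = rootReflection α := Equiv.ext he
  refine ⟨inner_rootReflection α, fun x => ⟨fun hx => ?_, D.reflect_mem α hα x⟩⟩
  have := D.reflect_mem α hα _ hx
  rwa [← rootReflection_apply, rootReflection_rootReflection] at this

variable {D} {w : Equiv.Perm V}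

lemma inner_apply_apply (hw : w ∈ D.rootAutomorphisms) (x y : V) : ⟪w x, w y⟫ = ⟪x, y⟫ :=
  hw.1 x y

lemma apply_mem_R0_iff (hw : w ∈ D.rootAutomorphisms) {x : V} : w x ∈ D.R0 ↔ x ∈ D.R0 :=
  hw.2 x

lemma inner_apply_left (hw : w ∈ D.rootAutomorphisms) (x y : V) : ⟪w x, y⟫ = ⟪x, w⁻¹ y⟫ := by
  rw [← inner_apply_apply hw x, Equiv.Perm.coe_inv, Equiv.apply_symm_apply]

lemma map_neg (hw : w ∈ D.rootAutomorphisms) (x : V) : w (-x) = -w x := by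
  refine ext_inner_right ℝ fun y => ?_
  rw [inner_apply_left hw, inner_neg_left, inner_neg_left, inner_apply_left hw]

lemma inner_coroot_apply_apply (hw : w ∈ D.rootAutomorphisms) (x α : V) :
    ⟪w x, coroot (w α)⟫ = ⟪x, coroot α⟫ := by
  rw [inner_coroot, inner_coroot, inner_apply_apply hw, inner_apply_apply hw]

lemma apply_mem_weightLattice (hw : w ∈ D.rootAutomorphisms) {ν : V}
    (hν : ν ∈ D.weightLattice) : w ν ∈ D.weightLattice := by
  intro α hα
  rw [← w.apply_symm_apply α, ← Equiv.Perm.coe_inv, inner_coroot_apply_apply hw]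
  exact hν _ ((apply_mem_R0_iff (inv_mem hw)).mpr hα)

variable (D)

lemma hshort_mem_R0 : D.hshort ∈ D.R0 := D.pos_subset D.hshort_mem

lemma hshort_ne_zero : D.hshort ≠ 0 := D.ne_zero _ D.hshort_mem_R0

lemma hshort_mem_weightLattice : D.hshort ∈ D.weightLattice :=
  fun α hα => D.crystallographic α hα _ D.hshort_mem_R0

lemma mem_span_simpleRoot {α : V} (hα : α ∈ D.R0) :
    α ∈ Submodule.span ℝ (Set.range D.simpleRoot) := by
  have hpos : ∀ β ∈ D.pos, β ∈ Submodule.span ℝ (Set.range D.simpleRoot) := by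
    intro β hβ
    obtain ⟨k, rfl⟩ := D.pos_natCombo β hβ
    exact Submodule.sum_mem _ fun j _ => Submodule.smul_mem _ _ (Submodule.subset_span ⟨j, rfl⟩)
  rcases D.pos_or_neg α hα with h | h
  · exact hpos α h
  · simpa using Submodule.neg_mem _ (hpos _ h)

lemma linearIndependent_simpleRoot : LinearIndependent ℝ D.simpleRoot := by
  refine linearIndependent_of_top_le_span_of_card_eq_finrank ?_ (by simp [D.rank_eq])
  rw [← D.span_top]
  exact Submodule.span_le.mpr fun α hα => D.mem_span_simpleRoot hα

lemma inner_hshort_coroot_nonneg {γ : V} (hγ : γ ∈ D.pos) : 0 ≤ ⟪D.hshort, coroot γ⟫ := by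
  have hγR := D.pos_subset hγ
  have hs := D.W0_le_rootAutomorphisms (D.rootReflection_mem_W0 hγR)
  by_contra! hneg
  -- `s_γ ϑ` is as long as `ϑ`, so `ϑ - s_γ ϑ = ⟨ϑ, γ∨⟩ γ` is a nonnegative combination of
  -- simple roots; with `⟨ϑ, γ∨⟩ < 0` this forces `γ = 0`.
  have hnorm : ‖rootReflection γ D.hshort‖ = ‖D.hshort‖ := by
    rw [norm_eq_sqrt_real_inner, norm_eq_sqrt_real_inner, inner_apply_apply hs]
  obtain ⟨m, hm⟩ :=
    D.hshort_highest _ ((apply_mem_R0_iff hs).mpr D.hshort_mem_R0) hnorm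
  obtain ⟨g, hg⟩ := D.pos_natCombo γ hγ
  have hcoef : ∀ j, (m j : ℝ) = ⟪D.hshort, coroot γ⟫ * g j := by
    have hsum : ∑ j, ((m j : ℝ) - ⟪D.hshort, coroot γ⟫ * g j) • D.simpleRoot j = 0 := by
      simp only [sub_smul, Finset.sum_sub_distrib, mul_smul, ← Finset.smul_sum, ← hm, ← hg,
        rootReflection_apply]
      abel
    intro j
    linarith [Fintype.linearIndependent_iff.mp D.linearIndependent_simpleRoot _ hsum j]
  refine D.ne_zero γ hγR (hg.trans (Finset.sum_eq_zero fun j _ => ?_))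
  have hgj : (g j : ℝ) = 0 := by
    nlinarith [hcoef j, (m j).cast_nonneg (α := ℝ), (g j).cast_nonneg (α := ℝ)]
  rw [hgj, zero_smul]

lemma inner_hshort_coroot_lt_two {γ : V} (hγ : γ ∈ D.R0) (hne : γ ≠ D.hshort) :
    ⟪D.hshort, coroot γ⟫ < 2 := by
  have hγ0 : 0 < ‖γ‖ := norm_pos_iff.mpr (D.ne_zero γ hγ)
  have hshort := D.hshort_short γ hγ
  have hcs := real_inner_le_norm D.hshort γ
  rw [inner_coroot, real_inner_self_eq_norm_mul_norm]
  refine lt_of_le_of_ne ?_ fun h => hne ?_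
  · rw [div_mul_eq_mul_div, div_le_iff₀ (by positivity)]
    nlinarith
  · have hip : ⟪D.hshort, γ⟫ = ‖γ‖ * ‖γ‖ := by
      field_simp at h
      linarith
    have hn : ‖D.hshort‖ = ‖γ‖ := by nlinarith
    have h' := inner_eq_norm_mul_iff_real.mp (hip.trans (by rw [hn]))
    rw [hn] at h'
    exact (smul_right_injective V hγ0.ne' h').symm

lemma floor_inner_hshort_coroot {β : V} (hβ : β ∈ D.pos) :
    ⌊⟪D.hshort, coroot β⟫⌋ = (if rootReflection D.hshort β ∈ D.pos then 0 else 1) +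
      (if β = D.hshort then 1 else 0) := by
  have hβR := D.pos_subset hβ
  obtain ⟨k, hk⟩ := D.crystallographic β hβR D.hshort D.hshort_mem_R0
  rw [hk, Int.floor_intCast]
  by_cases hθ : β = D.hshort
  · rw [hθ, inner_coroot_self D.hshort_ne_zero] at hk
    rw [hθ, rootReflection_self, if_neg (D.pos_not_both _ D.hshort_mem), if_pos rfl]
    exact_mod_cast hk.symm
  have h0 : (0 : ℝ) ≤ k := hk ▸ D.inner_hshort_coroot_nonneg hβ
  have h2 : (k : ℝ) < 2 := hk ▸ D.inner_hshort_coroot_lt_two hβR hθ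
  have hk01 : k = 0 ∨ k = 1 := by
    have : 0 ≤ k ∧ k < 2 := ⟨by exact_mod_cast h0, by exact_mod_cast h2⟩
    omega
  rw [if_neg hθ, add_zero]
  rcases hk01 with rfl | rfl
  · have hperp := (inner_coroot_eq_zero_iff (D.ne_zero β hβR)).mp (hk.trans Int.cast_zero)
    rw [rootReflection_eq_self_of_inner_eq_zero (by rwa [real_inner_comm]), if_pos hβ]
  · rw [if_neg]
    intro hpos
    have hs := D.W0_le_rootAutomorphisms (D.rootReflection_mem_W0 D.hshort_mem_R0)
    have hneg : ⟪D.hshort, coroot (rootReflection D.hshort β)⟫ = -1 :=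
      calc ⟪D.hshort, coroot (rootReflection D.hshort β)⟫
          = ⟪rootReflection D.hshort (-D.hshort), coroot (rootReflection D.hshort β)⟫ := by
            rw [map_neg hs, rootReflection_self, neg_neg]
        _ = -1 := by rw [inner_coroot_apply_apply hs, inner_neg_left, hk, Int.cast_one]
    linarith [D.inner_hshort_coroot_nonneg hpos]

def posRep (x : V) : V := if x ∈ D.pos then x else -x

lemma posRep_mem {x : V} (hx : x ∈ D.R0) : D.posRep x ∈ D.pos := by
  unfold posRep
  split_ifs with h
  · exact h
  · exact (D.pos_or_neg x hx).resolve_left h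

variable {D} {σ : Equiv.Perm V}

lemma posRep_inv_apply_posRep (hσ : σ ∈ D.rootAutomorphisms) {α : V} (hα : α ∈ D.pos) :
    D.posRep (σ⁻¹ (D.posRep (σ α))) = α := by
  by_cases h : σ α ∈ D.pos
  · simp [posRep, h, hα]
  · simp [posRep, h, map_neg (inv_mem hσ), D.pos_not_both α hα]

theorem prod_pos_apply {M : Type*} [CommMonoid M] (hσ : σ ∈ D.rootAutomorphisms) (g : V → M) :
    ∏ α ∈ D.pos, g (σ α) = ∏ β ∈ D.pos, if σ⁻¹ β ∈ D.pos then g β else g (-β) := by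
  have hmem : ∀ {u : Equiv.Perm V}, u ∈ D.rootAutomorphisms →
      ∀ α ∈ D.pos, D.posRep (u α) ∈ D.pos :=
    fun hu α hα => D.posRep_mem ((apply_mem_R0_iff hu).mpr (D.pos_subset hα))
  refine Finset.prod_nbij' (fun α => D.posRep (σ α)) (fun β => D.posRep (σ⁻¹ β))
    (hmem hσ) (hmem (inv_mem hσ)) (fun α hα => posRep_inv_apply_posRep hσ hα)
    (fun β hβ => by simpa using posRep_inv_apply_posRep (inv_mem hσ) hβ) fun α hα => ?_
  by_cases h : σ α ∈ D.pos
  · simp [posRep, h, hα]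
  · simp [posRep, h, map_neg (inv_mem hσ), D.pos_not_both α hα]

end RootSystemData

section PlaneWave

variable {V : Type*} [NormedAddCommGroup V] [InnerProductSpace ℝ V]

def planeWave (ζ x : V) : ℂ := Complex.exp (Complex.I * (⟪ζ, x⟫ : ℝ))

lemma planeWave_ne_zero (ζ x : V) : planeWave ζ x ≠ 0 := Complex.exp_ne_zero _

lemma norm_planeWave (ζ x : V) : ‖planeWave ζ x‖ = 1 := by
  rw [planeWave, mul_comm]
  exact Complex.norm_exp_ofReal_mul_I _

lemma planeWave_add (ζ x y : V) : planeWave ζ (x + y) = planeWave ζ x * planeWave ζ y := by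
  simp only [planeWave, inner_add_right, Complex.ofReal_add, mul_add, Complex.exp_add]

lemma planeWave_neg (ζ x : V) : planeWave ζ (-x) = (planeWave ζ x)⁻¹ := by
  simp only [planeWave, inner_neg_right, Complex.ofReal_neg, mul_neg, Complex.exp_neg]

lemma planeWave_zsmul (ζ x : V) (m : ℤ) : planeWave ζ (m • x) = planeWave ζ x ^ m := by
  rw [planeWave, planeWave, ← Complex.exp_int_mul, ← Int.cast_smul_eq_zsmul ℝ,
    real_inner_smul_right]
  push_cast
  ring_nf

lemma planeWave_ne_one {ζ x : V} (h : ∀ k : ℤ, ⟪ζ, x⟫ ≠ 2 * Real.pi * k) :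
    planeWave ζ x ≠ 1 := by
  rw [planeWave, Ne, Complex.exp_eq_one_iff]
  rintro ⟨k, hk⟩
  refine h k (Complex.ofReal_injective ?_)
  push_cast
  linear_combination -Complex.I * hk + ((⟪ζ, x⟫ : ℂ) - 2 * Real.pi * k) * Complex.I_sq

lemma sq_sub_planeWave_ne_zero {t : ℂ} (ht : ‖t‖ ≠ 1) (ζ x : V) : t ^ 2 - planeWave ζ x ≠ 0 := by
  rw [sub_ne_zero]
  intro h
  have := congrArg norm h
  rw [norm_pow, norm_planeWave, pow_eq_one_iff_of_nonneg (norm_nonneg t) two_ne_zero] at this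
  exact ht this

variable (τ : V → ℂ)

def cFactor (ζ α : V) : ℂ := (1 - τ α ^ 2 * planeWave ζ (-α)) / (1 - planeWave ζ (-α))

def betheFactor (ζ α : V) : ℂ := (1 - τ α ^ 2 * planeWave ζ α) / (τ α ^ 2 - planeWave ζ α)

variable {τ} {ζ α : V}

lemma cFactor_neg (hτ : τ (-α) = τ α) (hmod : ‖τ α‖ ≠ 1) :
    cFactor τ ζ (-α) = cFactor τ ζ α * betheFactor τ ζ α := by
  have h0 := planeWave_ne_zero ζ α
  have h2 := sq_sub_planeWave_ne_zero hmod ζ α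
  rw [cFactor, cFactor, betheFactor, hτ, neg_neg, planeWave_neg]
  -- at `e^{i⟨ζ,α⟩} = 1` both sides are `0` by the convention `x / 0 = 0`
  by_cases h1 : planeWave ζ α = 1
  · simp [h1]
  have h1' : 1 - planeWave ζ α ≠ 0 := sub_ne_zero.mpr (Ne.symm h1)
  field_simp
  ring

lemma betheFactor_neg (hτ : τ (-α) = τ α) : betheFactor τ ζ (-α) = (betheFactor τ ζ α)⁻¹ := by
  have h0 := planeWave_ne_zero ζ α
  set x := planeWave ζ α
  rw [betheFactor, betheFactor, hτ, planeWave_neg, inv_div,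
    show 1 - τ α ^ 2 * x⁻¹ = (τ α ^ 2 - x) * -x⁻¹ by field_simp; ring,
    show τ α ^ 2 - x⁻¹ = (1 - τ α ^ 2 * x) * -x⁻¹ by field_simp; ring,
    mul_div_mul_right _ _ (neg_ne_zero.mpr (inv_ne_zero h0))]

end PlaneWave

namespace RootSystemData

variable {V : Type*} [NormedAddCommGroup V] [InnerProductSpace ℝ V] (D : RootSystemData V)

def betheProduct (τ : V → ℂ) (ζ ν : V) : ℂ :=
  ∏ α ∈ D.pos, betheFactor τ ζ α ^ ⌊⟪ν, coroot α⟫⌋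

variable {D} {τ : V → ℂ} {w : Equiv.Perm V}

lemma Cfun_eq_prod_cFactor (ζ : V) : Cfun D τ ζ = ∏ α ∈ D.pos, cFactor τ ζ α := by
  refine Finset.prod_congr rfl fun α _ => ?_
  simp only [cFactor, planeWave, inner_neg_right, Complex.ofReal_neg, mul_neg]

lemma planeWave_apply_left (hw : w ∈ D.rootAutomorphisms) (ζ x : V) :
    planeWave (w ζ) x = planeWave ζ (w⁻¹ x) := by
  rw [planeWave, planeWave, inner_apply_left hw]

lemma tau_neg (hτ : ∀ u ∈ D.W0, ∀ α ∈ D.R0, τ (u α) = τ α) {α : V} (hα : α ∈ D.R0) :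
    τ (-α) = τ α := by
  simpa [rootReflection_self] using hτ _ (D.rootReflection_mem_W0 hα) α hα

lemma cFactor_apply_left (hw : w ∈ D.rootAutomorphisms) {α : V} (hτ : τ (w⁻¹ α) = τ α)
    (ζ : V) : cFactor τ (w ζ) α = cFactor τ ζ (w⁻¹ α) := by
  rw [cFactor, cFactor, planeWave_apply_left hw, map_neg (inv_mem hw), hτ]

lemma betheFactor_apply_left (hw : w ∈ D.rootAutomorphisms) {α : V} (hτ : τ (w⁻¹ α) = τ α)
    (ζ : V) : betheFactor τ (w ζ) α = betheFactor τ ζ (w⁻¹ α) := by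
  rw [betheFactor, betheFactor, planeWave_apply_left hw, hτ]

theorem betheProduct_apply_apply (hτ : ∀ u ∈ D.W0, ∀ α ∈ D.R0, τ (u α) = τ α)
    (hw : w ∈ D.W0) (ζ : V) {ν : V} (hν : ν ∈ D.weightLattice) :
    D.betheProduct τ (w ζ) (w ν) = D.betheProduct τ ζ ν := by
  have hw' := D.W0_le_rootAutomorphisms hw
  set g : V → ℂ := fun β => betheFactor τ (w ζ) β ^ ⌊⟪w ν, coroot β⟫⌋
  have hg : ∀ α ∈ D.pos, g (w α) = betheFactor τ ζ α ^ ⌊⟪ν, coroot α⟫⌋ := by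
    intro α hα
    have hτα : τ (w⁻¹ (w α)) = τ (w α) := by
      rw [Equiv.Perm.coe_inv, Equiv.symm_apply_apply, hτ w hw α (D.pos_subset hα)]
    simp only [g, betheFactor_apply_left hw' hτα, Equiv.Perm.coe_inv, Equiv.symm_apply_apply,
      inner_coroot_apply_apply hw']
  have hg_neg : ∀ β ∈ D.pos, g (-β) = g β := by
    intro β hβ
    obtain ⟨k, hk⟩ := apply_mem_weightLattice hw' hν β (D.pos_subset hβ)
    simp only [g, betheFactor_neg (tau_neg hτ (D.pos_subset hβ)), coroot_neg, inner_neg_right,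
      hk, ← Int.cast_neg, Int.floor_intCast, zpow_neg, inv_zpow, inv_inv]
  rw [betheProduct, betheProduct, ← Finset.prod_congr rfl hg, prod_pos_apply hw' g]
  exact Finset.prod_congr rfl fun β hβ => by split_ifs; exacts [rfl, (hg_neg β hβ).symm]

theorem Cfun_rootReflection_hshort (hτ : ∀ u ∈ D.W0, ∀ α ∈ D.R0, τ (u α) = τ α)
    (hmod : ∀ α ∈ D.R0, ‖τ α‖ ≠ 1) (ζ : V) :
    Cfun D τ (rootReflection D.hshort ζ) = Cfun D τ ζ *
      ∏ β ∈ D.pos, if rootReflection D.hshort β ∈ D.pos then 1 else betheFactor τ ζ β := by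
  set s := rootReflection D.hshort
  have hsW := D.rootReflection_mem_W0 D.hshort_mem_R0
  have hs := D.W0_le_rootAutomorphisms hsW
  calc Cfun D τ (s ζ)
      = ∏ α ∈ D.pos, cFactor τ ζ (s α) := by
        rw [Cfun_eq_prod_cFactor]
        refine Finset.prod_congr rfl fun α hα => ?_
        rw [cFactor_apply_left hs (by rw [rootReflection_inv]; exact hτ s hsW α (D.pos_subset hα)),
          rootReflection_inv]
    _ = ∏ β ∈ D.pos, if s β ∈ D.pos then cFactor τ ζ β else cFactor τ ζ (-β) := by
        rw [prod_pos_apply hs, rootReflection_inv]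
    _ = ∏ β ∈ D.pos, cFactor τ ζ β * if s β ∈ D.pos then 1 else betheFactor τ ζ β := by
        refine Finset.prod_congr rfl fun β hβ => ?_
        have hβR := D.pos_subset hβ
        split_ifs
        · rw [mul_one]
        · exact cFactor_neg (tau_neg hτ hβR) (hmod β hβR)
    _ = _ := by rw [Finset.prod_mul_distrib, Cfun_eq_prod_cFactor]

theorem prod_betheFactor_mul_betheFactor_hshort (ζ : V) :
    (∏ β ∈ D.pos, if rootReflection D.hshort β ∈ D.pos then 1 else betheFactor τ ζ β) *
      betheFactor τ ζ D.hshort = D.betheProduct τ ζ D.hshort := by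
  rw [← Finset.prod_ite_eq_of_mem' D.pos D.hshort (betheFactor τ ζ) D.hshort_mem,
    ← Finset.prod_mul_distrib, betheProduct]
  refine Finset.prod_congr rfl fun β hβ => ?_
  rw [D.floor_inner_hshort_coroot hβ]
  split_ifs <;> simp [sq]

theorem Cfun_rootReflection_hshort_mul_betheFactor
    (hτ : ∀ u ∈ D.W0, ∀ α ∈ D.R0, τ (u α) = τ α) (hmod : ∀ α ∈ D.R0, ‖τ α‖ ≠ 1)
    (hw : w ∈ D.W0) {ξ : V} {c : ℤ}
    (hBethe : Complex.exp (Complex.I * ((c : ℝ) * ⟪ξ, w⁻¹ D.hshort⟫ : ℝ))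
      = D.betheProduct τ ξ (w⁻¹ D.hshort)) :
    Cfun D τ (rootReflection D.hshort (w ξ)) * betheFactor τ (w ξ) D.hshort
      = Cfun D τ (w ξ) * planeWave (w ξ) D.hshort ^ c := by
  have hw' := D.W0_le_rootAutomorphisms hw
  calc _ = Cfun D τ (w ξ) * D.betheProduct τ (w ξ) (w (w⁻¹ D.hshort)) := by
        rw [Cfun_rootReflection_hshort hτ hmod, mul_assoc,
          prod_betheFactor_mul_betheFactor_hshort, Equiv.Perm.coe_inv,
          Equiv.apply_symm_apply]
    _ = Cfun D τ (w ξ) * D.betheProduct τ ξ (w⁻¹ D.hshort) := by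
        rw [betheProduct_apply_apply hτ hw ξ
          (apply_mem_weightLattice (inv_mem hw') D.hshort_mem_weightLattice)]
    _ = _ := by
        rw [← hBethe, planeWave_apply_left hw', planeWave, ← Complex.exp_int_mul]
        push_cast
        ring_nf

end RootSystemData

section IntegralReflection

lemma geom_sum_Icc_one_zpow {K : Type*} [Field K] {p : K} (hp0 : p ≠ 0) (hp1 : p ≠ 1) {m : ℤ}
    (hm : 0 ≤ m) : ∑ k ∈ Finset.Icc 1 m, p ^ k = p * (p ^ m - 1) / (p - 1) := by
  have hp : p - 1 ≠ 0 := sub_ne_zero.mpr hp1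
  induction m, hm using Int.leInduction with
  | base => simp
  | succ m hm ih =>
    rw [← Finset.insert_Icc_right_eq_Icc_add_one (by omega), Finset.sum_insert (by simp), ih,
      zpow_add_one₀ hp0]
    field_simp
    ring

lemma geom_sum_Ico_zero_zpow_neg {K : Type*} [Field K] {p : K} (hp0 : p ≠ 0) (hp1 : p ≠ 1)
    {n : ℤ} (hn : 0 ≤ n) : ∑ k ∈ Finset.Ico 0 n, p ^ (-k) = p * (1 - p ^ (-n)) / (p - 1) := by
  have hp : p - 1 ≠ 0 := sub_ne_zero.mpr hp1
  induction n, hn using Int.leInduction with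
  | base => simp
  | succ n hn ih =>
    rw [← Finset.insert_Ico_right_eq_Ico_add_one hn, Finset.sum_insert (by simp), ih, neg_add,
      zpow_add₀ hp0, zpow_neg_one]
    field_simp
    ring

variable {V : Type*} [NormedAddCommGroup V] [InnerProductSpace ℝ V]

section

variable {R ι : Type*} [Field R] (c : ℝ) (a : V × ℤ) (s : Finset ι) (b : ι → R) (f : ι → V → R)

lemma Jop_sum_mul (x : V) :
    Jop c a (fun y => ∑ i ∈ s, b i * f i y) x = ∑ i ∈ s, b i * Jop c a (f i) x := by
  unfold Jop
  split_ifs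
  · rw [Finset.sum_comm]
    simp only [Finset.mul_sum, mul_neg, Finset.sum_neg_distrib]
  · simp
  · rw [Finset.sum_comm]
    simp only [Finset.mul_sum]

lemma Iop_sum_mul (τ : V × ℤ → R) (x : V) :
    Iop c τ a (fun y => ∑ i ∈ s, b i * f i y) x = ∑ i ∈ s, b i * Iop c τ a (f i) x := by
  simp only [Iop, Jop_sum_mul, Finset.mul_sum, ← Finset.sum_add_distrib]
  exact Finset.sum_congr rfl fun i _ => by ring

end

lemma Jop_planeWave {c : ℝ} {a : V × ℤ} {ζ x : V} {m : ℤ} (hm : aval c a x = m)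
    (hp : planeWave ζ (-a.1) ≠ 1) :
    Jop c a (planeWave ζ) x = planeWave ζ x *
      (planeWave ζ (-a.1) * (1 - planeWave ζ (-a.1) ^ m) / (planeWave ζ (-a.1) - 1)) := by
  set p := planeWave ζ (-a.1)
  have hp0 : p ≠ 0 := planeWave_ne_zero _ _
  have hshift : ∀ k : ℤ, planeWave ζ (x + k • -a.1) = planeWave ζ x * p ^ k := fun k => by
    rw [planeWave_add, planeWave_zsmul]
  unfold Jop
  rw [hm, Int.floor_intCast]
  rcases lt_trichotomy 0 m with h | rfl | h
  · rw [if_pos (by exact_mod_cast h)]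
    simp_rw [sub_eq_add_neg, ← smul_neg, hshift, ← Finset.mul_sum,
      geom_sum_Icc_one_zpow hp0 hp h.le]
    ring
  · simp
  · rw [if_neg (by exact_mod_cast h.not_gt), if_neg (by exact_mod_cast h.ne)]
    have hshift' : ∀ k : ℤ, planeWave ζ (x + k • a.1) = planeWave ζ x * p ^ (-k) := fun k => by
      rw [← neg_smul_neg, hshift]
    simp_rw [hshift', ← Finset.mul_sum]
    rw [geom_sum_Ico_zero_zpow_neg hp0 hp (by omega), neg_neg]

lemma Iop_planeWave {c : ℝ} (τ : V × ℤ → ℂ) {a : V × ℤ} {ζ x : V} {m : ℤ}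
    (hm : aval c a x = m) (hp : planeWave ζ (-a.1) ≠ 1) :
    Iop c τ a (planeWave ζ) x = planeWave ζ x * (τ a * planeWave ζ (-a.1) ^ m +
      (τ a - (τ a)⁻¹) *
        (planeWave ζ (-a.1) * (1 - planeWave ζ (-a.1) ^ m) / (planeWave ζ (-a.1) - 1))) := by
  rw [Iop, Jop_planeWave hm hp, sAff, hm, Int.cast_smul_eq_zsmul, sub_eq_add_neg, ← smul_neg,
    planeWave_add, planeWave_zsmul]
  ring

/-- The coefficient of the reflected plane wave in `I₀ e_ζ`, as a function of
`τ₀` and `q = e^{i⟨ζ, ϑ⟩}`. -/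
def reflCoeff (t q : ℂ) : ℂ := (t⁻¹ * q - t) / (q - 1)

lemma reflCoeff_inv {t q : ℂ} (ht : t ≠ 0) (hq0 : q ≠ 0) (hq1 : q ≠ 1) (htq : t ^ 2 - q ≠ 0) :
    reflCoeff t q⁻¹ = reflCoeff t q * ((1 - t ^ 2 * q) / (t ^ 2 - q)) := by
  have h1 : q - 1 ≠ 0 := sub_ne_zero.mpr hq1
  have h2 : q⁻¹ - 1 ≠ 0 := sub_ne_zero.mpr (inv_ne_one.mpr hq1)
  unfold reflCoeff
  field_simp
  ring

theorem RootSystemData.Iop_a0_planeWave (D : RootSystemData V) (c : ℤ) (t : ℂ) {ζ lam : V}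
    (hlam : lam ∈ D.weightLattice) (hq : planeWave ζ D.hshort ≠ 1) :
    Iop c (fun _ => t) (-D.hshort, 1) (planeWave ζ) lam =
      planeWave ζ D.hshort ^ c * reflCoeff t (planeWave ζ D.hshort) *
          planeWave (rootReflection D.hshort ζ) lam +
        (t - reflCoeff t (planeWave ζ D.hshort)) * planeWave ζ lam := by
  obtain ⟨k, hk⟩ := hlam _ D.hshort_mem_R0
  have hs := D.W0_le_rootAutomorphisms (D.rootReflection_mem_W0 D.hshort_mem_R0)
  set q := planeWave ζ D.hshort
  have hq0 : q ≠ 0 := planeWave_ne_zero _ _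
  have hm : aval c (-D.hshort, 1) lam = ((c - k : ℤ) : ℝ) := by
    simp only [aval, coroot_neg, inner_neg_right, hk]
    push_cast
    ring
  have hp : planeWave ζ (-(-D.hshort, (1 : ℤ)).1) = q := by rw [neg_neg]
  have hrefl : planeWave (rootReflection D.hshort ζ) lam = planeWave ζ lam * q ^ (-k) := by
    rw [planeWave_apply_left hs, rootReflection_inv, rootReflection_apply, hk, sub_eq_add_neg,
      ← neg_smul, ← Int.cast_neg, Int.cast_smul_eq_zsmul, planeWave_add, planeWave_zsmul]
  rw [Iop_planeWave _ hm (hp ▸ hq), hp, hrefl, zpow_sub₀ hq0, zpow_neg]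
  have hq1 : q - 1 ≠ 0 := sub_ne_zero.mpr hq
  unfold reflCoeff
  field_simp
  ring

end IntegralReflection

lemma sum_orbit_apply {α M : Type*} [AddCommMonoid M] {H : Subgroup (Equiv.Perm α)}
    {s : Finset (Equiv.Perm α)} (hs : ∀ w, w ∈ s ↔ w ∈ H) {u : Equiv.Perm α} (hu : u ∈ H)
    (g : α → M) (x : α) : ∑ w ∈ s, g (u (w x)) = ∑ w ∈ s, g (w x) :=
  Finset.sum_nbij' (u * ·) (u⁻¹ * ·)
    (fun w hw => (hs _).mpr (mul_mem hu ((hs w).mp hw)))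
    (fun w hw => (hs _).mpr (mul_mem (inv_mem hu) ((hs w).mp hw)))
    (fun w _ => inv_mul_cancel_left u w) (fun w _ => mul_inv_cancel_left u w) fun _ _ => rfl

namespace RootSystemData

variable {V : Type*} [NormedAddCommGroup V] [InnerProductSpace ℝ V] (D : RootSystemData V)

theorem Iop_a0_planeWaveSum (c : ℤ) (τ : V → ℂ) (t : ℂ) {W0fin : Finset (Equiv.Perm V)}
    (hW0fin : ∀ w, w ∈ W0fin ↔ w ∈ D.W0) {ξ lam : V} (hlam : lam ∈ D.weightLattice)
    (hq : ∀ w ∈ W0fin, planeWave (w ξ) D.hshort ≠ 1) :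
    Iop c (fun _ => t) (-D.hshort, 1) (planeWaveSum D τ W0fin ξ) lam =
      ∑ w ∈ W0fin, (Cfun D τ (rootReflection D.hshort (w ξ)) *
            planeWave (rootReflection D.hshort (w ξ)) D.hshort ^ c *
            reflCoeff t (planeWave (rootReflection D.hshort (w ξ)) D.hshort) +
          Cfun D τ (w ξ) * (t - reflCoeff t (planeWave (w ξ) D.hshort))) *
        planeWave (w ξ) lam := by
  set s := rootReflection D.hshort
  calc Iop c (fun _ => t) (-D.hshort, 1) (planeWaveSum D τ W0fin ξ) lam
      = ∑ w ∈ W0fin, Cfun D τ (w ξ) * Iop c (fun _ => t) (-D.hshort, 1) (planeWave (w ξ)) lam :=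
        Iop_sum_mul _ _ _ _ _ _ _
    _ = ∑ w ∈ W0fin, Cfun D τ (w ξ) * planeWave (w ξ) D.hshort ^ c *
            reflCoeff t (planeWave (w ξ) D.hshort) * planeWave (s (w ξ)) lam +
          ∑ w ∈ W0fin, Cfun D τ (w ξ) * (t - reflCoeff t (planeWave (w ξ) D.hshort)) *
            planeWave (w ξ) lam := by
        rw [← Finset.sum_add_distrib]
        refine Finset.sum_congr rfl fun w hw => ?_
        rw [D.Iop_a0_planeWave c t hlam (hq w hw)]
        ring
    _ = _ := by
        rw [← sum_orbit_apply hW0fin (D.rootReflection_mem_W0 D.hshort_mem_R0)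
          (fun ζ => Cfun D τ ζ * planeWave ζ D.hshort ^ c * reflCoeff t (planeWave ζ D.hshort) *
            planeWave (s ζ) lam) ξ]
        simp only [s, rootReflection_rootReflection, ← Finset.sum_add_distrib, add_mul]

variable {D} {τ : V → ℂ}

theorem Cfun_rootReflection_mul_reflCoeff_add {c : ℤ} {ζ : V} (ht : τ D.hshort ≠ 0)
    (hmod : ‖τ D.hshort‖ ≠ 1) (hq : planeWave ζ D.hshort ≠ 1)
    (hC : Cfun D τ (rootReflection D.hshort ζ) * betheFactor τ ζ D.hshort
      = Cfun D τ ζ * planeWave ζ D.hshort ^ c) :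
    Cfun D τ (rootReflection D.hshort ζ) * planeWave (rootReflection D.hshort ζ) D.hshort ^ c *
        reflCoeff (τ D.hshort) (planeWave (rootReflection D.hshort ζ) D.hshort) +
      Cfun D τ ζ * (τ D.hshort - reflCoeff (τ D.hshort) (planeWave ζ D.hshort)) =
      τ D.hshort * Cfun D τ ζ := by
  set q := planeWave ζ D.hshort
  have hs := D.W0_le_rootAutomorphisms (D.rootReflection_mem_W0 D.hshort_mem_R0)
  have hqc : q ^ c ≠ 0 := zpow_ne_zero _ (planeWave_ne_zero _ _)
  rw [planeWave_apply_left hs, rootReflection_inv, rootReflection_self, planeWave_neg,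
    reflCoeff_inv ht (planeWave_ne_zero _ _) hq (sq_sub_planeWave_ne_zero hmod _ _), inv_zpow]
  rw [betheFactor] at hC
  linear_combination (reflCoeff (τ D.hshort) q * (q ^ c)⁻¹) * hC +
    (reflCoeff (τ D.hshort) q * Cfun D τ ζ) * inv_mul_cancel₀ hqc

end RootSystemData

open RootSystemData in
theorem statement9_general {V : Type*} [NormedAddCommGroup V] [InnerProductSpace ℝ V]
    (D : RootSystemData V) (cz : ℤ)
    (τ : V → ℂ) (hτ0 : ∀ α ∈ D.R0, τ α ≠ 0)
    (hτinv : ∀ α ∈ D.R0, ∀ β ∈ D.R0, (∃ w ∈ D.W0, w α = β) → τ α = τ β)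
    (hτmod : ∀ α ∈ D.R0, ‖τ α‖ ≠ 1)
    (W0fin : Finset (Equiv.Perm V)) (hW0fin : ∀ w : Equiv.Perm V, w ∈ W0fin ↔ w ∈ D.W0)
    (ξ : V) (hreg : ∀ α ∈ D.R0, ∀ k : ℤ, ⟪ξ, α⟫ ≠ 2 * Real.pi * k)
    (hBethe : ∀ ν ∈ D.rootLattice,
      Complex.exp (Complex.I * ((cz : ℝ) * ⟪ξ, ν⟫ : ℝ))
        = ∏ α ∈ D.pos,
            ((1 - (τ α) ^ 2 * Complex.exp (Complex.I * (⟪ξ, α⟫ : ℝ))) /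
              ((τ α) ^ 2 - Complex.exp (Complex.I * (⟪ξ, α⟫ : ℝ))))
            ^ ⌊⟪ν, coroot α⟫⌋) :
    ∀ lam ∈ D.weightLattice,
      Iop (cz : ℝ) (fun _ : V × ℤ => τ D.hshort) (-D.hshort, (1 : ℤ))
          (planeWaveSum D τ W0fin ξ) lam
        = τ D.hshort * planeWaveSum D τ W0fin ξ lam := by
  intro lam hlam
  have hθ := D.hshort_mem_R0
  have hτW : ∀ u ∈ D.W0, ∀ α ∈ D.R0, τ (u α) = τ α := fun u hu α hα =>
    (hτinv α hα _ ((apply_mem_R0_iff (D.W0_le_rootAutomorphisms hu)).mpr hα) ⟨u, hu, rfl⟩).symm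
  have hq : ∀ w ∈ W0fin, planeWave (w ξ) D.hshort ≠ 1 := fun w hw => by
    have hw' := D.W0_le_rootAutomorphisms ((hW0fin w).mp hw)
    refine planeWave_ne_one ?_
    rw [inner_apply_left hw']
    exact hreg _ ((apply_mem_R0_iff (inv_mem hw')).mpr hθ)
  rw [D.Iop_a0_planeWaveSum cz τ _ hW0fin hlam hq, planeWaveSum, Finset.mul_sum]
  refine Finset.sum_congr rfl fun w hw => ?_
  have hwW := (hW0fin w).mp hw
  have hν : w⁻¹ D.hshort ∈ D.rootLattice := Submodule.subset_span
    ((apply_mem_R0_iff (D.W0_le_rootAutomorphisms (inv_mem hwW))).mpr hθ)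
  rw [Cfun_rootReflection_mul_reflCoeff_add (hτ0 _ hθ) (hτmod _ hθ) (hq w hw)
    (Cfun_rootReflection_hshort_mul_betheFactor hτW hτmod hwW (hBethe _ hν)), mul_assoc]
  rfl

open RootSystemData in
/-- if the regular spectral parameter `ξ` satisfies the Bethe-type
equations, then the Bethe Ansatz wave function `φ_ξ` satisfies `I₀ φ_ξ = τ₀ φ_ξ` on the
weight lattice, where `I₀` is the integral-reflection operator of the affine simple
root `a₀ = -ϑ∨ + c`. -/
theorem statement9 {V : Type*} [NormedAddCommGroup V] [InnerProductSpace ℝ V]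
    (D : RootSystemData V) (cz : ℤ) (hc : 1 < cz)
    (τ : V → ℂ) (hτ0 : ∀ α ∈ D.R0, τ α ≠ 0)
    (hτinv : ∀ α ∈ D.R0, ∀ β ∈ D.R0, (∃ w ∈ D.W0, w α = β) → τ α = τ β)
    (hτmod : ∀ α ∈ D.R0, ‖τ α‖ ≠ 1)
    (W0fin : Finset (Equiv.Perm V)) (hW0fin : ∀ w : Equiv.Perm V, w ∈ W0fin ↔ w ∈ D.W0)
    (ξ : V) (hreg : ∀ α ∈ D.R0, ∀ k : ℤ, ⟪ξ, α⟫ ≠ 2 * Real.pi * k)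
    (hBethe : ∀ ν ∈ D.rootLattice,
      Complex.exp (Complex.I * ((cz : ℝ) * ⟪ξ, ν⟫ : ℝ))
        = ∏ α ∈ D.pos,
            ((1 - (τ α) ^ 2 * Complex.exp (Complex.I * (⟪ξ, α⟫ : ℝ))) /
              ((τ α) ^ 2 - Complex.exp (Complex.I * (⟪ξ, α⟫ : ℝ))))
            ^ ⌊⟪ν, coroot α⟫⌋) :
    ∀ lam ∈ D.weightLattice,
      Iop (cz : ℝ) (fun _ : V × ℤ => τ D.hshort) (-D.hshort, (1 : ℤ))
          (planeWaveSum D τ W0fin ξ) lam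
        = τ D.hshort * planeWaveSum D τ W0fin ξ lam :=
  statement9_general D cz τ hτ0 hτinv hτmod W0fin hW0fin ξ hreg hBethe
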